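/- For every integer k ≥ 0, all real numbers p, q with 0 < q < p ≤ 1, and every real x with |x| < 1, the series Σ_{n=1}^{∞} [n]_{p,q}^k · x^n converges and equals (1/(p−q)^k) · Σ_{l=0}^{k} (−1)^{k−l} · binom(k,l) · (p^l q^{k−l} x)/(1 − p^l q^{k−l} x). -/

import Mathlib

open Finset

/-- The `(p,q)`-integer `[m]_{p,q} = (p^m - q^m)/(p - q)`. -/
noncomputable def pqInt (p q : ℝ) (m : ℕ) : ℝ := (p ^ m - q ^ m) / (p - q)

/-!
Expanding `(p^n - q^n)^k` by the binomial theorem writes `[n]_{p,q}^k` as a fixed linear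
combination of the geometric sequences `(p^l q^(k-l))^n`, `0 ≤ l ≤ k`. Since `|p|, |q| ≤ 1` and
`|x| < 1`, each `∑ₙ (p^l q^(k-l) x)^n` is a convergent geometric series, and summing the finitely
many of them gives the rational function.
-/

theorem sub_pow_pow_eq_sum {R : Type*} [CommRing R] (a b : R) (n k : ℕ) :
    (a ^ n - b ^ n) ^ k =
      ∑ l ∈ range (k + 1), (-1) ^ (k - l) * (k.choose l : R) * (a ^ l * b ^ (k - l)) ^ n := by
  rw [sub_eq_add_neg, add_pow]
  refine sum_congr rfl fun l _ => ?_
  rw [neg_pow]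
  ring

theorem hasSum_pow_succ_of_norm_lt_one {K : Type*} [NormedDivisionRing K] [CompleteSpace K]
    {ξ : K} (h : ‖ξ‖ < 1) : HasSum (fun n : ℕ => ξ ^ (n + 1)) (ξ / (1 - ξ)) := by
  simpa only [← pow_succ', div_eq_mul_inv] using (hasSum_geometric_of_norm_lt_one h).mul_left ξ

theorem abs_pow_mul_pow_mul_lt_one {a b x : ℝ} (ha : |a| ≤ 1) (hb : |b| ≤ 1) (hx : |x| < 1)
    (l m : ℕ) : |a ^ l * b ^ m * x| < 1 := by
  rw [abs_mul, abs_mul, abs_pow, abs_pow]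
  exact mul_lt_one_of_nonneg_of_lt_one_right
    (mul_le_one₀ (pow_le_one₀ (abs_nonneg a) ha) (by positivity) (pow_le_one₀ (abs_nonneg b) hb))
    (abs_nonneg x) hx

theorem pqInt_pow_eq_sum (p q : ℝ) (n k : ℕ) :
    pqInt p q n ^ k = 1 / (p - q) ^ k *
      ∑ l ∈ range (k + 1), (-1) ^ (k - l) * (k.choose l : ℝ) * (p ^ l * q ^ (k - l)) ^ n := by
  rw [pqInt, div_pow, sub_pow_pow_eq_sum, one_div_mul_eq_div]

theorem pqPolylog_neg_order_rational
    (k : ℕ) (p q : ℝ) (hq : 0 < q) (hqp : q < p) (hp : p ≤ 1)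
    (x : ℝ) (hx : |x| < 1) :
    HasSum (fun n : ℕ => pqInt p q (n + 1) ^ k * x ^ (n + 1))
      ((1 / (p - q) ^ k) *
        ∑ l ∈ Finset.range (k + 1),
          (-1 : ℝ) ^ (k - l) * (k.choose l : ℝ) *
            (p ^ l * q ^ (k - l) * x) / (1 - p ^ l * q ^ (k - l) * x)) := by
  have hp' : |p| ≤ 1 := abs_le.2 ⟨by linarith, hp⟩
  have hq' : |q| ≤ 1 := abs_le.2 ⟨by linarith, by linarith⟩
  have hterm : ∀ l ∈ range (k + 1), HasSum
      (fun n : ℕ => (-1 : ℝ) ^ (k - l) * (k.choose l : ℝ) * (p ^ l * q ^ (k - l) * x) ^ (n + 1))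
      ((-1 : ℝ) ^ (k - l) * (k.choose l : ℝ) *
        (p ^ l * q ^ (k - l) * x) / (1 - p ^ l * q ^ (k - l) * x)) := fun l _ => by
    have hr : ‖p ^ l * q ^ (k - l) * x‖ < 1 := by
      rw [Real.norm_eq_abs]
      exact abs_pow_mul_pow_mul_lt_one hp' hq' hx l (k - l)
    simpa only [mul_div_assoc] using
      (hasSum_pow_succ_of_norm_lt_one hr).mul_left ((-1 : ℝ) ^ (k - l) * (k.choose l : ℝ))
  refine ((hasSum_sum hterm).mul_left (1 / (p - q) ^ k)).congr_fun fun n => ?_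
  rw [pqInt_pow_eq_sum, mul_assoc, sum_mul]
  congr! 2 with l
  ring
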